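/- arXiv:1307.8305 — 2 statements merged into one kernel-verified Lean document; each statement's English description precedes it below -/
import Mathlib

section
/- There exists σ > 0 (one may take σ = σ₂/(2σ₁²), where σ₁ = max{v_BᵀKv_B : B a working set} and σ₂ = min{v_BᵀKv_B : B a working set with v_BᵀKv_B > 0}) such that for every second-order working set selection W and every α ∈ R \ R*, the Newton step gain satisfies g̃_W(α) ≥ σ·ψ(α)², the inequality being understood in [0, ∞]. -/
open Matrix Filter Topology ENNReal

namespace SMO

noncomputable section

variable {l : ℕ}

/-- The dual SVM objective `f(α) = yᵀα − (1/2) αᵀKα`. -/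
def obj (y : Fin l → ℝ) (K : Matrix (Fin l) (Fin l) ℝ) (α : Fin l → ℝ) : ℝ :=
  y ⬝ᵥ α - (1 / 2) * (α ⬝ᵥ (K *ᵥ α))

/-- The gradient `∇f(α) = y − Kα`. -/
def grad (y : Fin l → ℝ) (K : Matrix (Fin l) (Fin l) ℝ) (α : Fin l → ℝ) : Fin l → ℝ :=
  y - K *ᵥ α

/-- The direction `v_B = e_i − e_j` of a working set `B = (i, j)`. -/
def dir (B : Fin l × Fin l) : Fin l → ℝ :=
  Pi.single B.1 1 - Pi.single B.2 1

/-- Lower bound `L_i = min {0, y_i C}`. -/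
def lb (y : Fin l → ℝ) (C : ℝ) (i : Fin l) : ℝ := min 0 (y i * C)

/-- Upper bound `U_i = max {0, y_i C}`. -/
def ub (y : Fin l → ℝ) (C : ℝ) (i : Fin l) : ℝ := max 0 (y i * C)

/-- The feasible region `R`. -/
def feas (y : Fin l → ℝ) (C : ℝ) : Set (Fin l → ℝ) :=
  {α | (∑ i, α i) = 0 ∧ ∀ i, lb y C i ≤ α i ∧ α i ≤ ub y C i}

/-- `I_up(α) = {i : α_i < U_i}`. -/
def Iup (y : Fin l → ℝ) (C : ℝ) (α : Fin l → ℝ) : Set (Fin l) := {i | α i < ub y C i}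

/-- `I_down(α) = {i : α_i > L_i}`. -/
def Idown (y : Fin l → ℝ) (C : ℝ) (α : Fin l → ℝ) : Set (Fin l) := {i | lb y C i < α i}

/-- The set `B(α)` of working sets feasible at `α`. -/
def wsets (y : Fin l → ℝ) (C : ℝ) (α : Fin l → ℝ) : Set (Fin l × Fin l) :=
  {B | B.1 ∈ Iup y C α ∧ B.2 ∈ Idown y C α ∧ B.1 ≠ B.2}

/-- The optimal value `f* = max {f(α) : α ∈ R}`. -/
def fstar (y : Fin l → ℝ) (K : Matrix (Fin l) (Fin l) ℝ) (C : ℝ) : ℝ :=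
  sSup (obj y K '' feas y C)

/-- The optimal set `R* = {α ∈ R : f(α) = f*}`. -/
def opt (y : Fin l → ℝ) (K : Matrix (Fin l) (Fin l) ℝ) (C : ℝ) : Set (Fin l → ℝ) :=
  {α ∈ feas y C | obj y K α = fstar y K C}

/-- The gap function `ψ(α) = max {v_Bᵀ ∇f(α) : B ∈ B(α)}`. -/
def psi (y : Fin l → ℝ) (K : Matrix (Fin l) (Fin l) ℝ) (C : ℝ) (α : Fin l → ℝ) : ℝ :=
  sSup ((fun B => dir B ⬝ᵥ grad y K α) '' wsets y C α)

/-- The Newton-step gain `g̃_B(α) = (v_Bᵀ∇f(α))² / (2 v_BᵀKv_B) ∈ [0, ∞]`, with the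
conventions `g̃_B(α) = 0` if `v_BᵀKv_B = 0` and `v_Bᵀ∇f(α) = 0`, and `g̃_B(α) = ∞` if
`v_BᵀKv_B = 0` and `v_Bᵀ∇f(α) ≠ 0`. -/
def ngain (y : Fin l → ℝ) (K : Matrix (Fin l) (Fin l) ℝ) (B : Fin l × Fin l)
    (α : Fin l → ℝ) : ℝ≥0∞ :=
  if dir B ⬝ᵥ (K *ᵥ dir B) = 0 then
    (if dir B ⬝ᵥ grad y K α = 0 then 0 else ⊤)
  else ENNReal.ofReal ((dir B ⬝ᵥ grad y K α) ^ 2 / (2 * (dir B ⬝ᵥ (K *ᵥ dir B))))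

/-- A second-order working set selection: on every non-optimal feasible `α` it returns a
working set `W(α) = (i, j) ∈ B(α)` such that `i` maximizes `(∇f(α))_n` over `n ∈ I_up(α)`
and `j` maximizes `g̃_{(i,n)}(α)` over `n ∈ I_down(α) \ {i}`. -/
def IsSecondOrderWSS (y : Fin l → ℝ) (K : Matrix (Fin l) (Fin l) ℝ) (C : ℝ)
    (W : (Fin l → ℝ) → Fin l × Fin l) : Prop :=
  ∀ α ∈ feas y C \ opt y K C,
    W α ∈ wsets y C α ∧
    (∀ n ∈ Iup y C α, grad y K α n ≤ grad y K α (W α).1) ∧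
    (∀ n ∈ Idown y C α, n ≠ (W α).1 → ngain y K ((W α).1, n) α ≤ ngain y K (W α) α)

lemma dir_dotProduct (B : Fin l × Fin l) (v : Fin l → ℝ) : dir B ⬝ᵥ v = v B.1 - v B.2 := by
  simp [dir, sub_dotProduct, single_dotProduct]

lemma dir_dotProduct_mulVec_nonneg {K : Matrix (Fin l) (Fin l) ℝ} (hK : K.PosSemidef)
    (B : Fin l × Fin l) : 0 ≤ dir B ⬝ᵥ (K *ᵥ dir B) := by
  simpa using hK.dotProduct_mulVec_nonneg (dir B)

/-- The constant `σ₁` of the paper. -/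
def maxCurv (K : Matrix (Fin l) (Fin l) ℝ) : ℝ :=
  ⨆ B : Fin l × Fin l, dir B ⬝ᵥ (K *ᵥ dir B)

lemma dir_dotProduct_mulVec_le_maxCurv (K : Matrix (Fin l) (Fin l) ℝ) (B : Fin l × Fin l) :
    dir B ⬝ᵥ (K *ᵥ dir B) ≤ maxCurv K :=
  le_ciSup (f := fun B : Fin l × Fin l => dir B ⬝ᵥ (K *ᵥ dir B))
    (Set.finite_range _).bddAbove B

section gap

variable {y : Fin l → ℝ} {K : Matrix (Fin l) (Fin l) ℝ} {C : ℝ} {α : Fin l → ℝ}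

lemma le_psi {B : Fin l × Fin l} (hB : B ∈ wsets y C α) :
    dir B ⬝ᵥ grad y K α ≤ psi y K C α :=
  le_csSup ((Set.toFinite _).image _).bddAbove (Set.mem_image_of_mem _ hB)

lemma exists_psi_eq (hne : (wsets y C α).Nonempty) :
    ∃ B ∈ wsets y C α, dir B ⬝ᵥ grad y K α = psi y K C α :=
  (hne.image _).csSup_mem ((Set.toFinite _).image _)

lemma ofReal_sq_div_le_ngain {B : Fin l × Fin l} {s m : ℝ}
    (hq : 0 ≤ dir B ⬝ᵥ (K *ᵥ dir B)) (hqm : dir B ⬝ᵥ (K *ᵥ dir B) ≤ m)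
    (hs : s ^ 2 ≤ (dir B ⬝ᵥ grad y K α) ^ 2) :
    ENNReal.ofReal (s ^ 2 / (2 * m)) ≤ ngain y K B α := by
  unfold ngain
  split_ifs with hq0 hg
  · rw [hg] at hs
    simp [show s = 0 by nlinarith]
  · exact le_top
  · have hqpos : 0 < dir B ⬝ᵥ (K *ᵥ dir B) := lt_of_le_of_ne hq (Ne.symm hq0)
    gcongr

/-- Take `(p, q)` realising `ψ(α)` and `i = (W α).1`. As `i` maximises the gradient over
`I_up ∋ p`, the pair `(i, q)` has `v_Bᵀ∇f(α) ≥ ψ(α)` (in particular `q ≠ i` when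
`ψ(α) > 0`), and by the choice of `(W α).2` its gain is at most that of `W α`. -/
lemma IsSecondOrderWSS.exists_sq_psi_le {W : (Fin l → ℝ) → Fin l × Fin l}
    (hW : IsSecondOrderWSS y K C W) (hα : α ∈ feas y C \ opt y K C) :
    ∃ B, psi y K C α ^ 2 ≤ (dir B ⬝ᵥ grad y K α) ^ 2 ∧
      ngain y K B α ≤ ngain y K (W α) α := by
  obtain ⟨hWmem, hImax, hJmax⟩ := hW α hα
  rcases le_or_gt (psi y K C α) 0 with hψ | hψ
  · exact ⟨W α, by nlinarith [le_psi (K := K) hWmem], le_rfl⟩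
  obtain ⟨⟨p, q⟩, ⟨hp, hq, -⟩, hval⟩ := exists_psi_eq (K := K) ⟨_, hWmem⟩
  rw [dir_dotProduct] at hval
  have hpi := hImax p hp
  have hqi : q ≠ (W α).1 := by
    rintro rfl
    linarith
  refine ⟨((W α).1, q), ?_, hJmax q hq hqi⟩
  rw [dir_dotProduct]
  nlinarith

end gap

theorem newton_gain_lower_bound_general
    (y : Fin l → ℝ)
    (K : Matrix (Fin l) (Fin l) ℝ) (hK : K.PosSemidef) (C : ℝ) :
    ∃ σ : ℝ, 0 < σ ∧
      ∀ W : (Fin l → ℝ) → Fin l × Fin l, IsSecondOrderWSS y K C W →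
        ∀ α ∈ feas y C \ opt y K C,
          ENNReal.ofReal (σ * (psi y K C α) ^ 2) ≤ ngain y K (W α) α := by
  set m := max 1 (maxCurv K)
  refine ⟨(2 * m)⁻¹, by positivity, fun W hW α hα => ?_⟩
  obtain ⟨B, hψB, hgain⟩ := hW.exists_sq_psi_le hα
  rw [inv_mul_eq_div]
  exact (ofReal_sq_div_le_ngain (dir_dotProduct_mulVec_nonneg hK B)
    ((dir_dotProduct_mulVec_le_maxCurv K B).trans (le_max_right _ _)) hψB).trans hgain

/-- There exists `σ > 0` such that for every second-order working set
selection `W` and every `α ∈ R \ R*`, the Newton step gain satisfies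
`g̃_W(α) ≥ σ·ψ(α)²` (inequality in `[0, ∞]`). -/
theorem newton_gain_lower_bound
    (hl : 2 ≤ l) (y : Fin l → ℝ) (hy : ∀ i, y i = 1 ∨ y i = -1)
    (K : Matrix (Fin l) (Fin l) ℝ) (hK : K.PosSemidef) (C : ℝ) (hC : 0 < C) :
    ∃ σ : ℝ, 0 < σ ∧
      ∀ W : (Fin l → ℝ) → Fin l × Fin l, IsSecondOrderWSS y K C W →
        ∀ α ∈ feas y C \ opt y K C,
          ENNReal.ofReal (σ * (psi y K C α) ^ 2) ≤ ngain y K (W α) α :=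
  newton_gain_lower_bound_general y K hK C

end

end SMO
end

section
/- Let α ∈ ℝ^ℓ and let B₁, B₂ be working sets with Q₁₁ := v_{B₁}ᵀKv_{B₁} > 0 and Q₂₂ := v_{B₂}ᵀKv_{B₂} > 0. Set w₁ = v_{B₁}ᵀ∇f(α), w₂ = v_{B₂}ᵀ∇f(α), Q₁₂ = v_{B₁}ᵀKv_{B₂}, and let Q be the 2×2 matrix with rows (Q₁₁, Q₁₂) and (Q₁₂, Q₂₂); assume det(Q) > 0. With the planning-ahead step size μ₁ = (Q₂₂ w₁ − Q₁₂ w₂)/det(Q) and the follow-up Newton step μ₂ = (w₂ − Q₁₂ μ₁)/Q₂₂, the double-step gain is lower bounded by the single Newton step gain: f(α + μ₁ v_{B₁} + μ₂ v_{B₂}) − f(α) ≥ w₁²/(2Q₁₁). -/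
/-!
On the plane `α + μ₁ v_{B₁} + μ₂ v_{B₂}` the gain is the concave quadratic `μ ⬝ w − ½ μᵀQμ`,
and the planning-ahead pair `(μ₁, μ₂)` solves `Qμ = w`, so it maximizes the gain over the whole
plane, whereas the single Newton step only maximizes it along `v_{B₁}`. Explicitly, the excess
over `w₁² / (2 Q₁₁)` is `μ₂² det Q / (2 Q₁₁)`, a Schur complement of `Q`.
-/

open Matrix Filter Topology ENNReal

namespace SMO

noncomputable section

variable {l : ℕ}

section Objective

variable {y : Fin l → ℝ} {K : Matrix (Fin l) (Fin l) ℝ}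

theorem dotProduct_mulVec_comm_of_isSymm (hK : K.IsSymm) (u v : Fin l → ℝ) :
    u ⬝ᵥ (K *ᵥ v) = v ⬝ᵥ (K *ᵥ u) := by
  simpa only [hK.eq] using dotProduct_transpose_mulVec K u v

theorem obj_add_sub_obj (hK : K.IsSymm) (α d : Fin l → ℝ) :
    obj y K (α + d) - obj y K α = d ⬝ᵥ grad y K α - 1 / 2 * (d ⬝ᵥ (K *ᵥ d)) := by
  simp only [obj, grad, mulVec_add, dotProduct_add, add_dotProduct, dotProduct_sub]
  rw [dotProduct_mulVec_comm_of_isSymm hK d α, dotProduct_comm y d]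
  ring

theorem dotProduct_mulVec_smul_add_smul (hK : K.IsSymm) (u v : Fin l → ℝ) (a b : ℝ) :
    (a • u + b • v) ⬝ᵥ (K *ᵥ (a • u + b • v)) =
      a ^ 2 * (u ⬝ᵥ (K *ᵥ u)) + 2 * a * b * (u ⬝ᵥ (K *ᵥ v)) + b ^ 2 * (v ⬝ᵥ (K *ᵥ v)) := by
  simp only [mulVec_add, mulVec_smul, add_dotProduct, dotProduct_add, smul_dotProduct,
    dotProduct_smul, smul_eq_mul]
  rw [dotProduct_mulVec_comm_of_isSymm hK v u]
  ring

theorem obj_add_smul_add_smul_sub_obj (hK : K.IsSymm) (α u v : Fin l → ℝ) (a b : ℝ) :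
    obj y K (α + a • u + b • v) - obj y K α =
      a * (u ⬝ᵥ grad y K α) + b * (v ⬝ᵥ grad y K α) -
        1 / 2 * (a ^ 2 * (u ⬝ᵥ (K *ᵥ u)) + 2 * a * b * (u ⬝ᵥ (K *ᵥ v)) +
          b ^ 2 * (v ⬝ᵥ (K *ᵥ v))) := by
  rw [add_assoc, obj_add_sub_obj hK, dotProduct_mulVec_smul_add_smul hK, add_dotProduct,
    smul_dotProduct, smul_dotProduct, smul_eq_mul, smul_eq_mul]

end Objective

section TwoByTwo

variable {Q₁₁ Q₁₂ Q₂₂ w₁ w₂ μ₁ μ₂ : ℝ}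

theorem newton_system_of_planning_ahead (hdet : Q₁₁ * Q₂₂ - Q₁₂ * Q₁₂ ≠ 0) (hQ₂₂ : Q₂₂ ≠ 0)
    (hμ₁ : μ₁ = (Q₂₂ * w₁ - Q₁₂ * w₂) / (Q₁₁ * Q₂₂ - Q₁₂ * Q₁₂))
    (hμ₂ : μ₂ = (w₂ - Q₁₂ * μ₁) / Q₂₂) :
    Q₁₁ * μ₁ + Q₁₂ * μ₂ = w₁ ∧ Q₁₂ * μ₁ + Q₂₂ * μ₂ = w₂ := by
  have hμ₂' : Q₂₂ * μ₂ = w₂ - Q₁₂ * μ₁ := by rw [hμ₂]; exact mul_div_cancel₀ _ hQ₂₂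
  have hμ₁' : (Q₁₁ * Q₂₂ - Q₁₂ * Q₁₂) * μ₁ = Q₂₂ * w₁ - Q₁₂ * w₂ := by
    rw [hμ₁]; exact mul_div_cancel₀ _ hdet
  refine ⟨mul_left_cancel₀ hQ₂₂ ?_, by linarith⟩
  linear_combination hμ₁' + Q₁₂ * hμ₂'

theorem newton_gain_le_quadratic_model (hQ₁₁ : 0 < Q₁₁) (hdet : 0 ≤ Q₁₁ * Q₂₂ - Q₁₂ * Q₁₂)
    (h₁ : Q₁₁ * μ₁ + Q₁₂ * μ₂ = w₁) (h₂ : Q₁₂ * μ₁ + Q₂₂ * μ₂ = w₂) :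
    w₁ ^ 2 / (2 * Q₁₁) ≤
      μ₁ * w₁ + μ₂ * w₂ - 1 / 2 * (μ₁ ^ 2 * Q₁₁ + 2 * μ₁ * μ₂ * Q₁₂ + μ₂ ^ 2 * Q₂₂) := by
  have hexcess : μ₁ * w₁ + μ₂ * w₂ - 1 / 2 * (μ₁ ^ 2 * Q₁₁ + 2 * μ₁ * μ₂ * Q₁₂ + μ₂ ^ 2 * Q₂₂)
      - w₁ ^ 2 / (2 * Q₁₁) = μ₂ ^ 2 * (Q₁₁ * Q₂₂ - Q₁₂ * Q₁₂) / (2 * Q₁₁) := by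
    subst h₁ h₂
    field_simp
    ring
  have : 0 ≤ μ₂ ^ 2 * (Q₁₁ * Q₂₂ - Q₁₂ * Q₁₂) / (2 * Q₁₁) := by positivity
  linarith

end TwoByTwo

theorem planning_ahead_gain_bound_general
    (y : Fin l → ℝ)
    (K : Matrix (Fin l) (Fin l) ℝ) (hK : K.PosSemidef)
    (α : Fin l → ℝ) (B₁ B₂ : Fin l × Fin l)
    (w₁ w₂ Q₁₁ Q₁₂ Q₂₂ : ℝ)
    (hw₁ : w₁ = dir B₁ ⬝ᵥ grad y K α)
    (hw₂ : w₂ = dir B₂ ⬝ᵥ grad y K α)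
    (hQ₁₁ : Q₁₁ = dir B₁ ⬝ᵥ (K *ᵥ dir B₁)) (hQ₁₁pos : 0 < Q₁₁)
    (hQ₁₂ : Q₁₂ = dir B₁ ⬝ᵥ (K *ᵥ dir B₂))
    (hQ₂₂ : Q₂₂ = dir B₂ ⬝ᵥ (K *ᵥ dir B₂)) (hQ₂₂pos : 0 < Q₂₂)
    (hdet : 0 < (!![Q₁₁, Q₁₂; Q₁₂, Q₂₂] : Matrix (Fin 2) (Fin 2) ℝ).det)
    (μ₁ μ₂ : ℝ)
    (hμ₁ : μ₁ = (Q₂₂ * w₁ - Q₁₂ * w₂) / (!![Q₁₁, Q₁₂; Q₁₂, Q₂₂] : Matrix (Fin 2) (Fin 2) ℝ).det)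
    (hμ₂ : μ₂ = (w₂ - Q₁₂ * μ₁) / Q₂₂) :
    w₁ ^ 2 / (2 * Q₁₁) ≤ obj y K (α + μ₁ • dir B₁ + μ₂ • dir B₂) - obj y K α := by
  rw [det_fin_two_of] at hdet hμ₁
  obtain ⟨h₁, h₂⟩ := newton_system_of_planning_ahead hdet.ne' hQ₂₂pos.ne' hμ₁ hμ₂
  have hKsymm : K.IsSymm := isHermitian_iff_isSymm.mp hK.isHermitian
  rw [obj_add_smul_add_smul_sub_obj hKsymm, ← hw₁, ← hw₂, ← hQ₁₁, ← hQ₁₂, ← hQ₂₂]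
  exact newton_gain_le_quadratic_model hQ₁₁pos hdet.le h₁ h₂

/-- With `Q₁₁, Q₂₂ > 0` and `det(Q) > 0`, the planning-ahead step
`μ₁ = (Q₂₂w₁ − Q₁₂w₂)/det(Q)` followed by the Newton step `μ₂ = (w₂ − Q₁₂μ₁)/Q₂₂` has
double-step gain lower bounded by the single Newton step gain `w₁²/(2Q₁₁)`. -/
theorem planning_ahead_gain_bound
    (hl : 2 ≤ l) (y : Fin l → ℝ) (hy : ∀ i, y i = 1 ∨ y i = -1)
    (K : Matrix (Fin l) (Fin l) ℝ) (hK : K.PosSemidef)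
    (α : Fin l → ℝ) (B₁ B₂ : Fin l × Fin l) (hB₁ : B₁.1 ≠ B₁.2) (hB₂ : B₂.1 ≠ B₂.2)
    (w₁ w₂ Q₁₁ Q₁₂ Q₂₂ : ℝ)
    (hw₁ : w₁ = dir B₁ ⬝ᵥ grad y K α)
    (hw₂ : w₂ = dir B₂ ⬝ᵥ grad y K α)
    (hQ₁₁ : Q₁₁ = dir B₁ ⬝ᵥ (K *ᵥ dir B₁)) (hQ₁₁pos : 0 < Q₁₁)
    (hQ₁₂ : Q₁₂ = dir B₁ ⬝ᵥ (K *ᵥ dir B₂))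
    (hQ₂₂ : Q₂₂ = dir B₂ ⬝ᵥ (K *ᵥ dir B₂)) (hQ₂₂pos : 0 < Q₂₂)
    (hdet : 0 < (!![Q₁₁, Q₁₂; Q₁₂, Q₂₂] : Matrix (Fin 2) (Fin 2) ℝ).det)
    (μ₁ μ₂ : ℝ)
    (hμ₁ : μ₁ = (Q₂₂ * w₁ - Q₁₂ * w₂) / (!![Q₁₁, Q₁₂; Q₁₂, Q₂₂] : Matrix (Fin 2) (Fin 2) ℝ).det)
    (hμ₂ : μ₂ = (w₂ - Q₁₂ * μ₁) / Q₂₂) :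
    w₁ ^ 2 / (2 * Q₁₁) ≤ obj y K (α + μ₁ • dir B₁ + μ₂ • dir B₂) - obj y K α :=
  planning_ahead_gain_bound_general y K hK α B₁ B₂ w₁ w₂ Q₁₁ Q₁₂ Q₂₂ hw₁ hw₂ hQ₁₁ hQ₁₁pos hQ₁₂ hQ₂₂
    hQ₂₂pos hdet μ₁ μ₂ hμ₁ hμ₂

end

end SMO
end
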